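/- arXiv:1002.4121 — 3 statements merged into one kernel-verified Lean document; each statement's English description precedes it below -/
import Mathlib

section
/- Let X₁, …, X_n be i.i.d. symmetric real random variables with partial sum S_n. Then there exist universal constants κ₁, κ₂ > 0 such that for all x > 0: P(|S_n| > 9x) ≤ κ₁·n·P(|X₁| > x) + κ₂·(P(|S_n| > x))⁴. -/
/-!
Let `τ` be the first time the walk `|S_k|` exceeds `t`. On `{|S_n| > 3t}` either some `|X_k| > t`,
or `|S_n - S_τ| > t`, since `|S_τ| ≤ t + |X_τ|`. The event `{τ = j + 1}` is independent of the
increment `S_n - S_{j+1}`. Flipping the signs of a block of summands preserves the joint law, and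
this reflection gives both `P(|S_n - S_j| > t) ≤ 2 P(|S_n| > t)` and Lévy's bound
`P(τ ≤ n) ≤ 2 P(|S_n| > t)`. Hence `P(|S_n| > 3t) ≤ n P(|X₁| > t) + 4 P(|S_n| > t)²`; applying this
at `t = 3x` and at `t = x` and absorbing the cross terms gives `κ₁ = 8`, `κ₂ = 128`.
-/

open MeasureTheory ProbabilityTheory Finset Function

def signFlip (s : Finset ℕ) (v : ℕ → ℝ) : ℕ → ℝ := fun k => if k ∈ s then -v k else v k

lemma measurable_signFlip (s : Finset ℕ) : Measurable (signFlip s) := by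
  refine measurable_pi_lambda _ fun k => ?_
  by_cases hk : k ∈ s <;> simp only [signFlip, hk, if_true, if_false] <;> fun_prop

lemma sum_signFlip (s I : Finset ℕ) (v : ℕ → ℝ) :
    ∑ k ∈ I, signFlip s v k = ∑ k ∈ I, v k - 2 * ∑ k ∈ I ∩ s, v k := by
  have h : ∀ k, signFlip s v k = v k - 2 * if k ∈ s then v k else 0 := fun k => by
    by_cases hk : k ∈ s <;> simp only [signFlip, hk, if_true, if_false] <;> ring
  simp only [h, sum_sub_distrib, ← mul_sum, sum_ite_mem]

lemma sum_range_signFlip_range (v : ℕ → ℝ) (m j : ℕ) :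
    ∑ k ∈ range m, signFlip (range j) v k
      = ∑ k ∈ range m, v k - 2 * ∑ k ∈ range (min m j), v k := by
  rw [sum_signFlip, range_inter_range]

-- the event `τ = j + 1` of the walk of partial sums of `v`
def firstExit (t : ℝ) (j : ℕ) : Set (ℕ → ℝ) :=
  {v | t < |∑ k ∈ range (j + 1), v k| ∧ ∀ m ≤ j, |∑ k ∈ range m, v k| ≤ t}

lemma measurableSet_firstExit (t : ℝ) (j : ℕ) : MeasurableSet (firstExit t j) := by
  unfold firstExit
  measurability

lemma mem_firstExit_congr {t : ℝ} {j : ℕ} {v w : ℕ → ℝ}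
    (h : ∀ m ≤ j + 1, |∑ k ∈ range m, v k| = |∑ k ∈ range m, w k|) :
    v ∈ firstExit t j ↔ w ∈ firstExit t j := by
  simp only [firstExit, Set.mem_ofPred_eq, h _ le_rfl]
  exact and_congr_right' (forall₂_congr fun m hm => by rw [h m (by omega)])

lemma signFlip_mem_firstExit_iff {t : ℝ} {j : ℕ} {v : ℕ → ℝ} :
    signFlip (range (j + 1)) v ∈ firstExit t j ↔ v ∈ firstExit t j :=
  mem_firstExit_congr fun m hm => by
    rw [sum_range_signFlip_range, min_eq_left hm, ← abs_neg]; ring_nf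

lemma firstExit_pairwiseDisjoint (t : ℝ) : Pairwise (Disjoint on (firstExit t)) := by
  intro i j hij
  wlog h : i < j generalizing i j
  · exact (this hij.symm (by omega)).symm
  exact Set.disjoint_left.2 fun v hi hj => (hj.2 (i + 1) h).not_gt hi.1

lemma exists_mem_firstExit {t : ℝ} (ht : 0 ≤ t) {n : ℕ} {v : ℕ → ℝ}
    (hv : t < |∑ k ∈ range n, v k|) : ∃ j < n, v ∈ firstExit t j := by
  classical
  have hex : ∃ m, t < |∑ k ∈ range m, v k| := ⟨n, hv⟩
  obtain ⟨j, hj⟩ : ∃ j, Nat.find hex = j + 1 :=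
    Nat.exists_eq_add_one.2 (Nat.pos_of_ne_zero fun h0 => by
      simpa [h0] using ht.trans_lt (Nat.find_spec hex))
  refine ⟨j, by have := Nat.find_le (h := hex) hv; omega, hj ▸ Nat.find_spec hex, fun m hm => ?_⟩
  exact not_lt.1 (Nat.find_min hex (by omega))

lemma abs_sum_le_of_mem_firstExit {t : ℝ} {j n : ℕ} {v : ℕ → ℝ} (hv : v ∈ firstExit t j)
    (hj : |v j| ≤ t) :
    |∑ k ∈ range n, v k| ≤ 2 * t + |∑ k ∈ range n, v k - ∑ k ∈ range (j + 1), v k| := by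
  have hS : |∑ k ∈ range (j + 1), v k| ≤ 2 * t := by
    rw [sum_range_succ]
    linarith [abs_add_le (∑ k ∈ range j, v k) (v j), hv.2 j le_rfl]
  linarith [abs_sub_abs_le_abs_sub (∑ k ∈ range n, v k) (∑ k ∈ range (j + 1), v k)]

lemma lt_abs_or_lt_abs_of_two_mul_eq {t a b c : ℝ} (hc : t < |c|) (h : 2 * c = a + b) :
    t < |a| ∨ t < |b| := by
  by_contra! hab
  have := abs_add_le a b
  rw [← h, abs_mul, abs_two] at this
  linarith [hab.1, hab.2]

variable {Ω : Type*} [MeasurableSpace Ω] {P : Measure Ω} {X : ℕ → Ω → ℝ}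

abbrev generatedSigma (X : ℕ → Ω → ℝ) (S : Set ℕ) : MeasurableSpace Ω :=
  ⨆ i ∈ S, MeasurableSpace.comap (X i) inferInstance

omit [MeasurableSpace Ω] in
lemma measurable_generatedSigma {S : Set ℕ} {i : ℕ} (hi : i ∈ S) :
    Measurable[generatedSigma X S] (X i) :=
  (comap_measurable (X i)).mono
    (le_iSup₂ (f := fun i _ => MeasurableSpace.comap (X i) inferInstance) i hi) le_rfl

section

variable (hm : ∀ k, Measurable (X k)) (hI : iIndepFun X P)
include hm hI

lemma measureReal_firstExit_inter_eq_mul {j n : ℕ} (hjn : j < n) (t : ℝ) :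
    P.real ({ω | (fun k => X k ω) ∈ firstExit t j}
        ∩ {ω | t < |∑ k ∈ range n, X k ω - ∑ k ∈ range (j + 1), X k ω|})
      = P.real {ω | (fun k => X k ω) ∈ firstExit t j}
        * P.real {ω | t < |∑ k ∈ range n, X k ω - ∑ k ∈ range (j + 1), X k ω|} := by
  have hindep := indep_iSup_of_disjoint (fun k => (hm k).comap_le) hI.iIndep
    (Set.disjoint_left.2 fun k (hk : k < j + 1) (hk' : j + 1 ≤ k) => hk.not_ge hk')
  -- membership in `firstExit t j` only depends on the first `j + 1` coordinates
  have hA : MeasurableSet[generatedSigma X (Set.Iio (j + 1))]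
      {ω | (fun k => X k ω) ∈ firstExit t j} := by
    have htrunc : Measurable[generatedSigma X (Set.Iio (j + 1))]
        fun ω k => if k ≤ j then X k ω else 0 :=
      @measurable_pi_lambda Ω ℕ (fun _ => ℝ) (generatedSigma X _) _ _ fun k => by
      split_ifs with hk
      · exact measurable_generatedSigma (Nat.lt_succ_of_le hk)
      · exact measurable_const
    convert htrunc (measurableSet_firstExit t j) using 1
    ext ω
    refine mem_firstExit_congr fun m hmj => congrArg abs (sum_congr rfl fun k hk => ?_)
    exact (if_pos (by have := mem_range.1 hk; omega)).symm
  have hD : MeasurableSet[generatedSigma X (Set.Ici (j + 1))]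
      {ω | t < |∑ k ∈ range n, X k ω - ∑ k ∈ range (j + 1), X k ω|} := by
    simp_rw [← sum_Ico_eq_sub _ hjn]
    exact (Finset.measurable_sum _ fun k hk => measurable_generatedSigma (mem_Ico.1 hk).1)
      (measurableSet_lt measurable_const measurable_abs : MeasurableSet {r : ℝ | t < |r|})
  simp only [measureReal_def, (Indep_iff _ _ P).1 hindep _ _ hA hD, ENNReal.toReal_mul]

variable (hsymm : ∀ k, P.map (X k) = P.map (fun ω => -X k ω))
include hsymm

lemma map_signFlip_eq (s : Finset ℕ) :
    P.map (fun ω => signFlip s (fun k => X k ω)) = P.map (fun ω k => X k ω) := by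
  have hflip : ∀ k, Measurable fun r : ℝ => if k ∈ s then -r else r := fun k => by
    by_cases hk : k ∈ s <;> simp only [hk, if_true, if_false] <;> fun_prop
  have hY : iIndepFun (fun k ω => signFlip s (fun k => X k ω) k) P := hI.comp _ hflip
  refine (hY.map_fun_eq_infinitePi_map fun k => (hflip k).comp (hm k)).trans ?_
  rw [hI.map_fun_eq_infinitePi_map hm]
  congr 1
  funext k
  by_cases hk : k ∈ s
  · simp only [hk, if_true]; exact (hsymm k).symm
  · simp only [hk, if_false]; rfl

variable [IsFiniteMeasure P]

lemma measureReal_le_two_mul_of_subset_union_signFlip (s : Finset ℕ) {A : Set Ω}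
    {B : Set (ℕ → ℝ)} (hB : MeasurableSet B)
    (hA : A ⊆ {ω | (fun k => X k ω) ∈ B} ∪ {ω | signFlip s (fun k => X k ω) ∈ B}) :
    P.real A ≤ 2 * P.real {ω | (fun k => X k ω) ∈ B} := by
  have hpath : Measurable fun ω k => X k ω := measurable_pi_lambda _ hm
  have hflip :
      P.real {ω | signFlip s (fun k => X k ω) ∈ B} = P.real {ω | (fun k => X k ω) ∈ B} := by
    have := map_measureReal_apply (μ := P) (f := fun ω => signFlip s (fun k => X k ω))
      ((measurable_signFlip s).comp hpath) hB
    rw [map_signFlip_eq hm hI hsymm, map_measureReal_apply hpath hB] at this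
    exact this.symm
  calc P.real A ≤ P.real ({ω | (fun k => X k ω) ∈ B} ∪ {ω | signFlip s (fun k => X k ω) ∈ B}) :=
        measureReal_mono hA
    _ ≤ _ := measureReal_union_le _ _
    _ = _ := by rw [hflip]; ring

lemma measureReal_abs_sub_gt_le {j n : ℕ} (hjn : j ≤ n) (t : ℝ) :
    P.real {ω | t < |∑ k ∈ range n, X k ω - ∑ k ∈ range j, X k ω|}
      ≤ 2 * P.real {ω | t < |∑ k ∈ range n, X k ω|} := by
  refine measureReal_le_two_mul_of_subset_union_signFlip hm hI hsymm (range j)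
    (B := {v | t < |∑ k ∈ range n, v k|}) (measurableSet_lt (by fun_prop) (by fun_prop))
    fun ω hω => ?_
  simp only [Set.mem_union, Set.mem_ofPred_eq, sum_range_signFlip_range, min_eq_right hjn]
  exact lt_abs_or_lt_abs_of_two_mul_eq hω (by ring)

lemma measureReal_firstExit_le {j n : ℕ} (hjn : j < n) (t : ℝ) :
    P.real {ω | (fun k => X k ω) ∈ firstExit t j}
      ≤ 2 * P.real ({ω | (fun k => X k ω) ∈ firstExit t j} ∩ {ω | t < |∑ k ∈ range n, X k ω|}) := by
  refine measureReal_le_two_mul_of_subset_union_signFlip hm hI hsymm (range (j + 1))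
    (B := firstExit t j ∩ {v | t < |∑ k ∈ range n, v k|})
    ((measurableSet_firstExit t j).inter (measurableSet_lt (by fun_prop) (by fun_prop)))
    fun ω hω => ?_
  simp only [Set.mem_union, Set.mem_inter_iff, Set.mem_ofPred_eq, signFlip_mem_firstExit_iff,
    sum_range_signFlip_range, min_eq_right (Nat.succ_le_of_lt hjn)]
  rcases lt_abs_or_lt_abs_of_two_mul_eq (hω.1) (by ring :
    2 * ∑ k ∈ range (j + 1), X k ω = ∑ k ∈ range n, X k ω
      + -(∑ k ∈ range n, X k ω - 2 * ∑ k ∈ range (j + 1), X k ω)) with h | h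
  · exact Or.inl ⟨hω, h⟩
  · exact Or.inr ⟨hω, by rwa [abs_neg] at h⟩

lemma sum_measureReal_firstExit_le (n : ℕ) (t : ℝ) :
    ∑ j ∈ range n, P.real {ω | (fun k => X k ω) ∈ firstExit t j}
      ≤ 2 * P.real {ω | t < |∑ k ∈ range n, X k ω|} := by
  have hpath : Measurable fun ω k => X k ω := measurable_pi_lambda _ hm
  set E := {ω | t < |∑ k ∈ range n, X k ω|}
  set A := fun j => {ω | (fun k => X k ω) ∈ firstExit t j}
  calc ∑ j ∈ range n, P.real (A j)
      ≤ ∑ j ∈ range n, 2 * P.real (A j ∩ E) :=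
        sum_le_sum fun j hj => measureReal_firstExit_le hm hI hsymm (mem_range.1 hj) t
    _ = 2 * P.real (⋃ j ∈ range n, A j ∩ E) := by
        rw [← mul_sum, measureReal_biUnion_finset (f := fun j => A j ∩ E)
          (fun i _ j _ hij => ((firstExit_pairwiseDisjoint t hij).preimage _).mono
            Set.inter_subset_left Set.inter_subset_left)
          (fun j _ => (hpath (measurableSet_firstExit t j)).inter
            (measurableSet_lt measurable_const (by fun_prop)))]
    _ ≤ 2 * P.real E := mul_le_mul_of_nonneg_left
        (measureReal_mono (Set.iUnion₂_subset fun j _ => Set.inter_subset_right)) zero_le_two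

lemma measureReal_abs_sum_gt_three_mul_le {t : ℝ} (ht : 0 ≤ t) (n : ℕ) :
    P.real {ω | 3 * t < |∑ k ∈ range n, X k ω|}
      ≤ ∑ k ∈ range n, P.real {ω | t < |X k ω|}
        + (2 * P.real {ω | t < |∑ k ∈ range n, X k ω|}) ^ 2 := by
  set E := {ω | t < |∑ k ∈ range n, X k ω|}
  set A := fun j => {ω | (fun k => X k ω) ∈ firstExit t j}
  set D := fun j => {ω | t < |∑ k ∈ range n, X k ω - ∑ k ∈ range (j + 1), X k ω|}
  have hcover : {ω | 3 * t < |∑ k ∈ range n, X k ω|}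
      ⊆ (⋃ k ∈ range n, {ω | t < |X k ω|}) ∪ ⋃ j ∈ range n, A j ∩ D j := by
    intro ω hω
    by_cases hbig : ∃ k ∈ range n, t < |X k ω|
    · obtain ⟨k, hk, hkt⟩ := hbig
      exact Or.inl (Set.mem_biUnion hk hkt)
    push Not at hbig
    obtain ⟨j, hjn, hj⟩ := exists_mem_firstExit ht (by linarith [hω.out] : t < _)
    refine Or.inr (Set.mem_biUnion (mem_range.2 hjn) ⟨hj, ?_⟩)
    have := abs_sum_le_of_mem_firstExit (n := n) hj (hbig j (mem_range.2 hjn))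
    show t < _
    linarith [hω.out]
  have hAD : P.real (⋃ j ∈ range n, A j ∩ D j) ≤ (2 * P.real E) ^ 2 :=
    calc P.real (⋃ j ∈ range n, A j ∩ D j) ≤ ∑ j ∈ range n, P.real (A j ∩ D j) :=
          measureReal_biUnion_finset_le _ _
      _ = ∑ j ∈ range n, P.real (A j) * P.real (D j) :=
          sum_congr rfl fun j hj => measureReal_firstExit_inter_eq_mul hm hI (mem_range.1 hj) t
      _ ≤ ∑ j ∈ range n, P.real (A j) * (2 * P.real E) := by
          gcongr with j hj
          exact measureReal_abs_sub_gt_le hm hI hsymm (mem_range.1 hj) t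
      _ = (∑ j ∈ range n, P.real (A j)) * (2 * P.real E) := by rw [sum_mul]
      _ ≤ (2 * P.real E) * (2 * P.real E) := by
          gcongr
          exact sum_measureReal_firstExit_le hm hI hsymm n t
      _ = (2 * P.real E) ^ 2 := (sq _).symm
  calc P.real {ω | 3 * t < |∑ k ∈ range n, X k ω|}
      ≤ P.real ((⋃ k ∈ range n, {ω | t < |X k ω|}) ∪ ⋃ j ∈ range n, A j ∩ D j) :=
        measureReal_mono hcover
    _ ≤ P.real (⋃ k ∈ range n, {ω | t < |X k ω|}) + P.real (⋃ j ∈ range n, A j ∩ D j) :=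
        measureReal_union_le _ _
    _ ≤ _ := add_le_add (measureReal_biUnion_finset_le _ _) hAD

end

lemma sum_measureReal_abs_gt_le [IsFiniteMeasure P] (hm : ∀ k, Measurable (X k))
    (hident : ∀ k, P.map (X k) = P.map (X 0)) (n : ℕ) {s t : ℝ} (hst : s ≤ t) :
    ∑ k ∈ range n, P.real {ω | t < |X k ω|} ≤ n * P.real {ω | s < |X 0 ω|} := by
  have hsame : ∀ k, P.real {ω | t < |X k ω|} = P.real {ω | t < |X 0 ω|} := fun k =>
    congrArg ENNReal.toReal <| IdentDistrib.measure_mem_eq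
      ⟨(hm k).aemeasurable, (hm 0).aemeasurable, hident k⟩
      (measurableSet_lt measurable_const measurable_abs : MeasurableSet {r : ℝ | t < |r|})
  simp only [hsame, sum_const, card_range, nsmul_eq_mul]
  exact mul_le_mul_of_nonneg_left (measureReal_mono fun ω hω => hst.trans_lt hω) n.cast_nonneg

lemma le_eight_mul_add_of_le_add_sq {p q a b : ℝ} (ha : 0 ≤ a) (hq : 0 ≤ q) (hp1 : p ≤ 1)
    (hp : p ≤ a + (2 * q) ^ 2) (hq' : q ≤ a + (2 * b) ^ 2) : p ≤ 8 * a + 128 * b ^ 4 := by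
  rcases le_or_gt (1 / 8) a with ha8 | ha8
  · nlinarith [pow_nonneg (sq_nonneg b) 2]
  have hq2 : q ^ 2 ≤ (a + 4 * b ^ 2) ^ 2 := by nlinarith
  nlinarith [sq_nonneg (a - 4 * b ^ 2)]

theorem stmt11 :
    ∃ κ₁ κ₂ : ℝ, 0 < κ₁ ∧ 0 < κ₂ ∧
      ∀ (Ω : Type) (_ : MeasurableSpace Ω) (P : Measure Ω), IsProbabilityMeasure P →
        ∀ (X : ℕ → Ω → ℝ), (∀ k, Measurable (X k)) →
          iIndepFun X P →
          (∀ k, Measure.map (X k) P = Measure.map (X 0) P) →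
          (∀ k, Measure.map (X k) P = Measure.map (fun ω => -(X k ω)) P) →
          ∀ (n : ℕ) (x : ℝ), 0 < x →
            (P {ω | 9 * x < |∑ k ∈ Finset.range n, X k ω|}).toReal
              ≤ κ₁ * n * (P {ω | x < |X 0 ω|}).toReal
                + κ₂ * ((P {ω | x < |∑ k ∈ Finset.range n, X k ω|}).toReal) ^ 4 := by
  refine ⟨8, 128, by norm_num, by norm_num, fun Ω _ P _ X hm hI hident hsymm n x hx => ?_⟩
  have h9 := measureReal_abs_sum_gt_three_mul_le hm hI hsymm (by positivity : 0 ≤ 3 * x) n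
  have h3 := measureReal_abs_sum_gt_three_mul_le hm hI hsymm hx.le n
  rw [← mul_assoc, show (3 : ℝ) * 3 = 9 by norm_num] at h9
  rw [mul_assoc]
  exact le_eight_mul_add_of_le_add_sq (by positivity) measureReal_nonneg measureReal_le_one
    (h9.trans (add_le_add_left (sum_measureReal_abs_gt_le hm hident n (by linarith)) _))
    (h3.trans (add_le_add_left (sum_measureReal_abs_gt_le hm hident n le_rfl) _))
end

section
/- Let L be slowly varying, increasing to ∞, with φ(y) = ∫_1^y L(u)/u du and ψ = φ^{-1}, and let c > 1. Define n_k = ψ(ck). Then n_{k+1} > n_k + n_k/L(n_k) for all sufficiently large k; that is, the windows (n_k, n_k + n_k/L(n_k)] are eventually pairwise disjoint. -/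
open Filter Real Set

def SlowlyVarying (L : ℝ → ℝ) : Prop :=
  ∀ c > (0:ℝ), Tendsto (fun x => L (c * x) / L x) atTop (nhds 1)

/-!
Write `n = ψ(ck)`, so that `φ(n) = ck` and `φ(ψ(c(k+1))) = ck + c`. Since `L` is increasing,
the window `[n, n + n/L(n)] ⊆ [n, 2n]` contributes
`∫ L(u)/u ≤ (n/L(n)) · L(2n)/n = L(2n)/L(n)` to `φ`, and slow variation makes this ratio `< c`
once `n` is large. Hence `φ(n + n/L(n)) < φ(ψ(c(k+1)))`, and `φ` is strictly increasing.
That `ψ(ck) → ∞` follows from `ψ` inverting the continuous unbounded `φ` on `[1, ∞)`.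
-/

open MeasureTheory intervalIntegral

theorem MonotoneOn.intervalIntegrable_div_id {μ : Measure ℝ} [IsLocallyFiniteMeasure μ]
    {L : ℝ → ℝ} {a b : ℝ} (hL : MonotoneOn L (uIcc a b)) (h0 : (0 : ℝ) ∉ uIcc a b) :
    IntervalIntegrable (fun u => L u / u) μ a b := by
  simp only [div_eq_mul_inv]
  exact hL.intervalIntegrable.mul_continuousOn
    (continuousOn_inv₀.mono fun x hx (hx0 : x = 0) => h0 (hx0 ▸ hx))

theorem intervalIntegral.continuousOn_primitive_Ici {E : Type*} [NormedAddCommGroup E]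
    [NormedSpace ℝ E] {μ : Measure ℝ} [NullSingletonClass μ] {f : ℝ → E} {a : ℝ}
    (hf : ∀ b, a ≤ b → IntervalIntegrable f μ a b) :
    ContinuousOn (fun t => ∫ u in a..t, f u ∂μ) (Ici a) := by
  intro x hx
  have hIcc : Icc a (x + 1) = uIcc a (x + 1) := (uIcc_of_le (by linarith [mem_Ici.1 hx])).symm
  have hcont := continuousOn_primitive_interval' (hf (x + 1) (by linarith [mem_Ici.1 hx]))
    left_mem_uIcc
  rw [← hIcc] at hcont
  refine (hcont x ⟨hx, by linarith⟩).mono_of_mem_nhdsWithin ?_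
  rw [← Ici_inter_Iic]
  exact inter_mem_nhdsWithin _ (Iic_mem_nhds (by linarith))

theorem Set.mapsTo_Ici_of_leftInvOn {α δ : Type*} [ConditionallyCompleteLinearOrder α]
    [TopologicalSpace α] [OrderTopology α] [DenselyOrdered α] [LinearOrder δ] [TopologicalSpace δ]
    [OrderClosedTopology δ] {f : α → δ} {g : δ → α} {a : α} (hf : ContinuousOn f (Ici a))
    (htop : Tendsto f atTop atTop) (hinv : LeftInvOn g f (Ici a)) :
    MapsTo g (Ici (f a)) (Ici a) := by
  intro x hx
  obtain ⟨y, hy, rfl⟩ := intermediate_value_Ici hf htop hx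
  rwa [hinv hy]

theorem tendsto_atTop_of_rightInvOn {α β : Type*} [LinearOrder α] [Preorder β] [NoMaxOrder β]
    {f : α → β} {g : β → α} {s : Set α} {t : Set β} (hf : MonotoneOn f s) (hs : ¬BddAbove s)
    (hg : MapsTo g t s) (hinv : RightInvOn g f t) (ht : t ∈ atTop) :
    Tendsto g atTop atTop := by
  refine tendsto_atTop.2 fun M => ?_
  obtain ⟨b, hb, hMb⟩ := not_bddAbove_iff.1 hs M
  filter_upwards [ht, eventually_gt_atTop (f b)] with x hxt hx
  by_contra! hgx
  have := hf (hg hxt) hb (hgx.trans hMb).le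
  rw [hinv hxt] at this
  exact this.not_gt hx

theorem integral_div_id_le_of_monotoneOn {L : ℝ → ℝ} {n m : ℝ} (hL : MonotoneOn L (Icc n m))
    (hn : 0 < n) (hnm : n ≤ m) (hLn : 0 ≤ L n) :
    ∫ u in n..m, L u / u ≤ (m - n) * (L m / n) := by
  have hLm : 0 ≤ L m := hLn.trans (hL ⟨le_rfl, hnm⟩ ⟨hnm, le_rfl⟩ hnm)
  have hbound : ∀ x ∈ Icc n m, L x / x ≤ L m / n := fun x hx =>
    div_le_div₀ hLm (hL hx ⟨hnm, le_rfl⟩ hx.2) hn hx.1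
  have hint : IntervalIntegrable (fun u => L u / u) volume n m :=
    (uIcc_of_le hnm ▸ hL).intervalIntegrable_div_id
      (by rw [uIcc_of_le hnm]; exact fun h => hn.not_ge h.1)
  calc ∫ u in n..m, L u / u ≤ ∫ _ in n..m, L m / n :=
        integral_mono_on hnm hint intervalIntegrable_const hbound
    _ = (m - n) * (L m / n) := by rw [intervalIntegral.integral_const, smul_eq_mul]

theorem integral_div_id_window_le {L : ℝ → ℝ} {n : ℝ} (hL : MonotoneOn L (Icc n (2 * n)))
    (hn : 0 < n) (hLn : 1 ≤ L n) :
    ∫ u in n..n + n / L n, L u / u ≤ L (2 * n) / L n := by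
  have hLpos : 0 < L n := one_pos.trans_le hLn
  have hwidth : n / L n ≤ n := div_le_self hn.le hLn
  have hsub : Icc n (n + n / L n) ⊆ Icc n (2 * n) := Icc_subset_Icc_right (by linarith)
  calc ∫ u in n..n + n / L n, L u / u
        ≤ (n + n / L n - n) * (L (n + n / L n) / n) :=
        integral_div_id_le_of_monotoneOn (hL.mono hsub) hn (by linarith [div_pos hn hLpos])
          hLpos.le
    _ = L (n + n / L n) / L n := by field_simp; ring
    _ ≤ L (2 * n) / L n := by
        gcongr
        exact hL (hsub ⟨by linarith [div_pos hn hLpos], le_rfl⟩) ⟨by linarith, le_rfl⟩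
          (by linarith)

theorem SlowlyVarying.eventually_lt_mul {L : ℝ → ℝ} (hL : SlowlyVarying L)
    (hpos : ∀ᶠ x in atTop, 0 < L x) {a c : ℝ} (ha : 0 < a) (hc : 1 < c) :
    ∀ᶠ x in atTop, L (a * x) < c * L x := by
  filter_upwards [(hL a ha).eventually (gt_mem_nhds hc), hpos] with x hx hLx
  exact (div_lt_iff₀ hLx).1 hx

theorem stmt14_general (L : ℝ → ℝ)
    (hmono : MonotoneOn L (Set.Ici 1))
    (htop : Tendsto L atTop atTop)
    (hsv : SlowlyVarying L)
    (φ ψ : ℝ → ℝ) (hφ : ∀ t, φ t = ∫ u in (1:ℝ)..t, L u / u)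
    (hφmono : StrictMonoOn φ (Set.Ici 1))
    (hφtop : Tendsto φ atTop atTop)
    (hψ : ∀ y ∈ Set.Ici (1:ℝ), ψ (φ y) = y)
    (hψ' : ∀ x ∈ Set.Ici (0:ℝ), φ (ψ x) = x)
    (c : ℝ) (hc : 1 < c) :
    ∀ᶠ k : ℕ in atTop,
      ψ (c * k) + ψ (c * k) / L (ψ (c * k)) < ψ (c * (k + 1)) := by
  have hint (a b : ℝ) (ha : 1 ≤ a) (hb : 1 ≤ b) :
      IntervalIntegrable (fun u => L u / u) volume a b :=
    (hmono.mono fun x hx => le_trans (le_min ha hb) hx.1).intervalIntegrable_div_id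
      fun h => by linarith [le_min ha hb, h.1]
  have hφ_sub (a b : ℝ) (ha : 1 ≤ a) (hb : 1 ≤ b) :
      φ b - φ a = ∫ u in a..b, L u / u := by
    rw [hφ, hφ]
    exact integral_interval_sub_left (hint 1 b le_rfl hb) (hint 1 a le_rfl ha)
  have hφcont : ContinuousOn φ (Ici 1) := by
    rw [funext hφ]
    exact continuousOn_primitive_Ici fun b hb => hint 1 b le_rfl hb
  have hψ_ge : MapsTo ψ (Ici 0) (Ici 1) := by
    simpa only [hφ, integral_same] using mapsTo_Ici_of_leftInvOn hφcont hφtop hψ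
  have hψtop : Tendsto ψ atTop atTop :=
    tendsto_atTop_of_rightInvOn hφmono.monotoneOn (not_bddAbove_Ici 1) hψ_ge hψ' (Ici_mem_atTop 0)
  have hn : Tendsto (fun k : ℕ => ψ (c * k)) atTop atTop :=
    hψtop.comp (tendsto_natCast_atTop_atTop.const_mul_atTop (by linarith))
  filter_upwards [hn.eventually (hsv.eventually_lt_mul (htop.eventually_gt_atTop 0) two_pos hc),
    hn.eventually (htop.eventually_ge_atTop 1)] with k hLc hL1
  have hc0 : 0 ≤ c := by linarith
  have hck : c * k ∈ Ici 0 := mul_nonneg hc0 k.cast_nonneg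
  have hck' : c * (k + 1) ∈ Ici 0 := mul_nonneg hc0 (by positivity)
  set n := ψ (c * k)
  have hn1 : 1 ≤ n := hψ_ge hck
  have hm1 : 1 ≤ n + n / L n :=
    le_add_of_le_of_nonneg hn1 (div_nonneg (by linarith) (by linarith))
  have hwindow : φ (n + n / L n) - φ n < c := by
    rw [hφ_sub _ _ hn1 hm1]
    calc ∫ u in n..n + n / L n, L u / u ≤ L (2 * n) / L n :=
          integral_div_id_window_le (hmono.mono fun x hx => hn1.trans hx.1) (by linarith) hL1
      _ < c := (div_lt_iff₀ (by linarith)).2 hLc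
  have hstep : φ (ψ (c * (k + 1))) - φ n = c := by
    rw [hψ' _ hck, hψ' _ hck']
    ring
  exact (hφmono.lt_iff_lt hm1 (hψ_ge hck')).1 (by linarith)

theorem stmt14 (L : ℝ → ℝ)
    (hdiff : DifferentiableOn ℝ L (Set.Ici 1))
    (hmono : MonotoneOn L (Set.Ici 1))
    (htop : Tendsto L atTop atTop)
    (hsv : SlowlyVarying L)
    (hdec : ∃ x₀ : ℝ, AntitoneOn (fun x => x * deriv L x / L x) (Set.Ici x₀))
    (φ ψ : ℝ → ℝ) (hφ : ∀ t, φ t = ∫ u in (1:ℝ)..t, L u / u)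
    (hφmono : StrictMonoOn φ (Set.Ici 1))
    (hφtop : Tendsto φ atTop atTop)
    (hψ : ∀ y ∈ Set.Ici (1:ℝ), ψ (φ y) = y)
    (hψ' : ∀ x ∈ Set.Ici (0:ℝ), φ (ψ x) = x)
    (c : ℝ) (hc : 1 < c) :
    ∀ᶠ k : ℕ in atTop,
      ψ (c * k) + ψ (c * k) / L (ψ (c * k)) < ψ (c * (k + 1)) :=
  stmt14_general L hmono htop hsv φ ψ hφ hφmono hφtop hψ hψ' c hc
end

section
/- Let X be a nonnegative random variable, L slowly varying and increasing to ∞ with φ(y) = ∫_1^y L(u)/u du, ψ = φ^{-1}, c > 1, n_k = ψ(ck), and f an increasing function with asymptotic inverse f^{(-1)}. If E f^{(-1)}(X²) < ∞, then Σ_{k} (n_k/L(n_k))·P(X > η·√(f(n_k))) < ∞ for every η > 0. -/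
/-!
Write `n k = ψ (c k)`, so that `φ (n (k+1)) - φ (n k) = c`. Since `L` is monotone, this increment
lies between `L (n k) log (n (k+1) / n k)` and `L (n (k+1)) log (n (k+1) / n k)`. As `L → ∞`, the
lower bound gives `n (k+1) ≤ 2 n k` eventually, and then slow variation (`L (2x) ≤ 2 L x`) turns
the upper bound into `n k / L (n k) ≤ (2/c) (n (k+1) - n k)`. Hence the weights over
`{k : n k ≤ T}` telescope to at most `4T/c`. Slow variation also gives `f (r x) ≤ η² f x` for some
`r > 0`, so `X > η √(f (n k))` forces `r n k ≤ f⁻¹ (X²)`. Exchanging sum and expectation bounds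
the series by a multiple of `E f⁻¹ (X²)`.
-/

open MeasureTheory ProbabilityTheory Filter Real
open scoped ENNReal

open Set

noncomputable def normingFun (L : ℝ → ℝ) (x : ℝ) : ℝ :=
  min (x / L x * (log (L x) + log (log x))) x

section

variable {L : ℝ → ℝ}

theorem apply_two_pow_mul_le {x₁ b : ℝ} (hx₁ : 0 ≤ x₁) (hb : 0 ≤ b)
    (h : ∀ x ≥ x₁, L (2 * x) ≤ b * L x) (m : ℕ) : L (2 ^ m * x₁) ≤ b ^ m * L x₁ := by
  induction m with
  | zero => simp
  | succ m ih =>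
    calc L (2 ^ (m + 1) * x₁) = L (2 * (2 ^ m * x₁)) := by ring_nf
      _ ≤ b * L (2 ^ m * x₁) := h _ (le_mul_of_one_le_left hx₁ (one_le_pow₀ one_le_two))
      _ ≤ b * (b ^ m * L x₁) := mul_le_mul_of_nonneg_left ih hb
      _ = b ^ (m + 1) * L x₁ := by ring

theorem log_add_log_log_le (hmono : MonotoneOn L (Ici 1)) {x y : ℝ} (hy : 1 < y) (hyx : y ≤ x)
    (hLy : 0 < L y) : log (L y) + log (log y) ≤ log (L x) + log (log x) :=
  add_le_add (log_le_log hLy (hmono hy.le (hy.le.trans hyx) hyx))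
    (log_le_log (log_pos hy) (log_le_log (by linarith) hyx))

theorem tendsto_log_add_log_log_atTop (htop : Tendsto L atTop atTop) :
    Tendsto (fun x => log (L x) + log (log x)) atTop atTop := by
  refine tendsto_atTop_add_right_of_le' atTop 0 (tendsto_log_atTop.comp htop) ?_
  filter_upwards [eventually_ge_atTop (exp 1)] with x hx
  exact log_nonneg ((le_log_iff_exp_le ((exp_pos 1).trans_le hx)).mpr hx)

theorem tendsto_normingFun_atTop (htop : Tendsto L atTop atTop)
    (hle : ∀ᶠ x in atTop, L x ≤ x) : Tendsto (normingFun L) atTop atTop := by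
  refine tendsto_atTop.mpr fun b => ?_
  filter_upwards [hle, htop.eventually_gt_atTop 0, eventually_ge_atTop b,
    (tendsto_log_add_log_log_atTop htop).eventually_ge_atTop (max b 0)]
    with x hLx hL0 hxb hd
  refine le_min ?_ hxb
  calc b ≤ max b 0 := le_max_left b 0
    _ ≤ log (L x) + log (log x) := hd
    _ ≤ x / L x * (log (L x) + log (log x)) :=
      le_mul_of_one_le_left ((le_max_right b 0).trans hd) ((one_le_div hL0).mpr hLx)

end

namespace SlowlyVarying

variable {L : ℝ → ℝ}

theorem eventually_le_mul (hsv : SlowlyVarying L) (hpos : ∀ᶠ x in atTop, 0 < L x)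
    {a b : ℝ} (ha : 0 < a) (hb : 1 < b) : ∀ᶠ x in atTop, L (a * x) ≤ b * L x := by
  filter_upwards [(hsv a ha).eventually (eventually_le_nhds hb), hpos] with x hx hLx
  rwa [div_le_iff₀ hLx] at hx

theorem eventually_le_self (hsv : SlowlyVarying L) (hmono : MonotoneOn L (Ici 1))
    (hpos : ∀ᶠ x in atTop, 0 < L x) : ∀ᶠ x in atTop, L x ≤ x := by
  obtain ⟨x₁, hx₁⟩ := ((hsv.eventually_le_mul hpos two_pos (by norm_num : (1 : ℝ) < 3 / 2)).and
    (eventually_ge_atTop 1)).exists_forall_of_atTop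
  have hx₁1 : 1 ≤ x₁ := (hx₁ x₁ le_rfl).2
  have hgeom := apply_two_pow_mul_le (by linarith) (by norm_num) (fun x hx => (hx₁ x hx).1)
  -- `L` grows at most like `(3/2)^m` along `2^m x₁`, which is eventually beaten by `2^m`.
  obtain ⟨m₀, hm₀⟩ := eventually_atTop.mp <|
    (tendsto_pow_atTop_atTop_of_one_lt (by norm_num : (1 : ℝ) < 4 / 3)).eventually_ge_atTop
      (3 / 2 * L x₁ / x₁)
  filter_upwards [eventually_ge_atTop (2 ^ m₀ * x₁)] with x hx
  have hx₁0 : 0 < x₁ := by linarith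
  have hxx₁ : x₁ ≤ x := (le_mul_of_one_le_left hx₁0.le (one_le_pow₀ one_le_two)).trans hx
  obtain ⟨m, hm, hm'⟩ := exists_nat_pow_near ((le_div_iff₀ hx₁0).mpr (by linarith))
    (one_lt_two : (1 : ℝ) < 2)
  rw [le_div_iff₀ hx₁0] at hm
  rw [div_lt_iff₀ hx₁0] at hm'
  have hmm₀ : m₀ ≤ m := by
    have : (2 : ℝ) ^ m₀ < 2 ^ (m + 1) := by
      rw [← mul_lt_mul_iff_left₀ hx₁0]; linarith
    have := (pow_lt_pow_iff_right₀ one_lt_two).mp this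
    omega
  have h43 := hm₀ m hmm₀
  rw [div_le_iff₀ hx₁0] at h43
  calc L x ≤ L (2 ^ (m + 1) * x₁) :=
        hmono (mem_Ici.mpr (by linarith)) (mem_Ici.mpr (by linarith)) hm'.le
    _ ≤ (3 / 2) ^ (m + 1) * L x₁ := hgeom (m + 1)
    _ = 3 / 2 * L x₁ * (3 / 2) ^ m := by ring
    _ ≤ (4 / 3) ^ m * x₁ * (3 / 2) ^ m := by gcongr
    _ = 2 ^ m * x₁ := by rw [mul_right_comm, ← mul_pow]; norm_num
    _ ≤ x := hm

theorem exists_normingFun_le_mul (hsv : SlowlyVarying L)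
    (hmono : MonotoneOn L (Ici 1)) (htop : Tendsto L atTop atTop) {ε : ℝ} (hε : 0 < ε) :
    ∃ r > 0, ∀ᶠ x in atTop, normingFun L (r * x) ≤ ε * normingFun L x := by
  obtain ⟨r, hr0, hr1, hrε⟩ : ∃ r : ℝ, 0 < r ∧ r ≤ 1 / 2 ∧ r < ε :=
    ⟨min ε 1 / 2, by positivity, by linarith [min_le_right ε 1], by linarith [min_le_left ε 1]⟩
  have hpos : ∀ᶠ x in atTop, 0 < L x := htop.eventually_gt_atTop 0
  have hrx : Tendsto (fun x => r * x) atTop atTop := tendsto_id.const_mul_atTop hr0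
  refine ⟨r, hr0, ?_⟩
  filter_upwards [hrx.eventually (hsv.eventually_le_mul hpos (inv_pos.mpr hr0)
      ((one_lt_div hr0).mpr hrε)), hpos, hrx.eventually hpos,
    hrx.eventually ((tendsto_log_add_log_log_atTop htop).eventually_ge_atTop 0),
    hrx.eventually (eventually_gt_atTop 1), eventually_ge_atTop 0]
    with x hsvx hLx hLrx hdrx hrx1 hx0
  rw [inv_mul_cancel_left₀ hr0.ne', div_mul_eq_mul_div, le_div_iff₀ hr0] at hsvx
  have hrxx : r * x ≤ x := by nlinarith
  have hquot : r * x / L (r * x) ≤ ε * (x / L x) := by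
    rw [div_le_iff₀ hLrx]
    calc r * x = x * (L x * r) / L x := by field_simp
      _ ≤ x * (ε * L (r * x)) / L x := by gcongr
      _ = ε * (x / L x) * L (r * x) := by ring
  have hA : r * x / L (r * x) * (log (L (r * x)) + log (log (r * x)))
      ≤ ε * (x / L x * (log (L x) + log (log x))) := by
    rw [← mul_assoc]
    exact mul_le_mul hquot (log_add_log_log_le hmono hrx1 hrxx hLrx) hdrx
      (mul_nonneg hε.le (div_nonneg hx0 hLx.le))
  rw [normingFun, normingFun, mul_min_of_nonneg _ _ hε.le]
  exact min_le_min hA (by nlinarith)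

end SlowlyVarying

theorem eventually_le_finv_of_le {f finv : ℝ → ℝ} (hfinvmono : ∃ y₀, MonotoneOn finv (Ici y₀))
    (hfinv : ∀ᶠ x in atTop, finv (f x) = x) (hftop : Tendsto f atTop atTop) :
    ∀ᶠ y in atTop, ∀ t, f y ≤ t → y ≤ finv t := by
  obtain ⟨y₀, hy₀⟩ := hfinvmono
  filter_upwards [hfinv, hftop.eventually_ge_atTop y₀] with y hy hfy t ht
  calc y = finv (f y) := hy.symm
    _ ≤ finv t := hy₀ hfy (hfy.trans ht) ht

theorem SlowlyVarying.exists_mul_le_finv_sq {L f finv : ℝ → ℝ} (hsv : SlowlyVarying L)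
    (hmono : MonotoneOn L (Ici 1)) (htop : Tendsto L atTop atTop)
    (hf : f =ᶠ[atTop] normingFun L) (hfinvmono : ∃ y₀, MonotoneOn finv (Ici y₀))
    (hfinv : ∀ᶠ x in atTop, finv (f x) = x) {η : ℝ} (hη : 0 < η) :
    ∃ r > 0, ∀ᶠ x in atTop, ∀ t, η * √(f x) < t → r * x ≤ finv (t ^ 2) := by
  obtain ⟨r, hr, hscale⟩ := hsv.exists_normingFun_le_mul hmono htop (pow_pos hη 2)
  have hftop : Tendsto f atTop atTop := (tendsto_normingFun_atTop htop
    (hsv.eventually_le_self hmono (htop.eventually_gt_atTop 0))).congr' hf.symm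
  have hrx : Tendsto (fun x => r * x) atTop atTop := tendsto_id.const_mul_atTop hr
  refine ⟨r, hr, ?_⟩
  filter_upwards [hscale, hf, hrx.eventually hf, hftop.eventually_ge_atTop 0,
    hrx.eventually (eventually_le_finv_of_le hfinvmono hfinv hftop)] with x hs h1 h2 hf0 hinv t ht
  refine hinv (t ^ 2) ?_
  calc f (r * x) = normingFun L (r * x) := h2
    _ ≤ η ^ 2 * normingFun L x := hs
    _ = (η * √(f x)) ^ 2 := by rw [← h1, mul_pow, sq_sqrt hf0]
    _ ≤ t ^ 2 := pow_le_pow_left₀ (by positivity) ht.le 2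

section Phi

variable {L φ : ℝ → ℝ}

theorem intervalIntegrable_div_id (hmono : MonotoneOn L (Ici 1)) {a b : ℝ} (ha : 1 ≤ a)
    (hb : 1 ≤ b) : IntervalIntegrable (fun u => L u / u) volume a b := by
  have hsub : uIcc a b ⊆ Ici 1 := fun u hu => (le_min ha hb).trans hu.1
  have hinv : ContinuousOn (fun u : ℝ => u⁻¹) (uIcc a b) :=
    continuousOn_inv₀.mono fun u hu => (zero_lt_one.trans_le (hsub hu)).ne'
  exact ((hmono.mono hsub).intervalIntegrable).mul_continuousOn hinv

theorem phi_sub_eq_integral (hmono : MonotoneOn L (Ici 1))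
    (hφ : ∀ t, φ t = ∫ u in (1:ℝ)..t, L u / u) {a b : ℝ} (ha : 1 ≤ a) (hb : 1 ≤ b) :
    φ b - φ a = ∫ u in a..b, L u / u := by
  rw [hφ, hφ]
  exact intervalIntegral.integral_interval_sub_left
    (intervalIntegrable_div_id hmono le_rfl hb) (intervalIntegrable_div_id hmono le_rfl ha)

theorem intervalIntegrable_const_div_id {m a b : ℝ} (ha : 0 < a) (hab : a ≤ b) :
    IntervalIntegrable (fun u => m / u) volume a b :=
  (continuousOn_const.div continuousOn_id fun _ hu =>
    (ha.trans_le (uIcc_of_le hab ▸ hu).1).ne').intervalIntegrable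

theorem integral_const_div_id {m a b : ℝ} (ha : 0 < a) (hab : a ≤ b) :
    ∫ u in a..b, m / u = m * log (b / a) := by
  simp_rw [div_eq_mul_inv m]
  rw [intervalIntegral.integral_const_mul, integral_inv]
  rw [uIcc_of_le hab]
  exact fun h => (ha.trans_le h.1).ne rfl

theorem mul_log_le_phi_sub (hmono : MonotoneOn L (Ici 1))
    (hφ : ∀ t, φ t = ∫ u in (1:ℝ)..t, L u / u) {a b : ℝ} (ha : 1 ≤ a) (hab : a ≤ b) :
    L a * log (b / a) ≤ φ b - φ a := by
  have ha0 : 0 < a := zero_lt_one.trans_le ha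
  rw [phi_sub_eq_integral hmono hφ ha (ha.trans hab), ← integral_const_div_id ha0 hab]
  refine intervalIntegral.integral_mono_on hab (intervalIntegrable_const_div_id ha0 hab)
    (intervalIntegrable_div_id hmono ha (ha.trans hab)) fun u hu => ?_
  exact div_le_div_of_nonneg_right (hmono ha (ha.trans hu.1) hu.1) (ha0.trans_le hu.1).le

theorem phi_sub_le_mul_log (hmono : MonotoneOn L (Ici 1))
    (hφ : ∀ t, φ t = ∫ u in (1:ℝ)..t, L u / u) {a b : ℝ} (ha : 1 ≤ a) (hab : a ≤ b) :
    φ b - φ a ≤ L b * log (b / a) := by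
  have ha0 : 0 < a := zero_lt_one.trans_le ha
  rw [phi_sub_eq_integral hmono hφ ha (ha.trans hab), ← integral_const_div_id ha0 hab]
  refine intervalIntegral.integral_mono_on hab (intervalIntegrable_div_id hmono ha (ha.trans hab))
    (intervalIntegrable_const_div_id ha0 hab) fun u hu => ?_
  exact div_le_div_of_nonneg_right (hmono (ha.trans hu.1) (ha.trans hab) hu.2)
    (ha0.trans_le hu.1).le

theorem strictMonoOn_phi (hmono : MonotoneOn L (Ici 1))
    (hφ : ∀ t, φ t = ∫ u in (1:ℝ)..t, L u / u) {u : ℝ} (hu : 1 ≤ u) (hLu : 0 < L u) :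
    StrictMonoOn φ (Ici u) := by
  intro a ha b hb hab
  have ha1 : 1 ≤ a := hu.trans ha
  have hLa : 0 < L a := hLu.trans_le (hmono hu ha1 ha)
  have hlog : 0 < log (b / a) := log_pos ((one_lt_div (zero_lt_one.trans_le ha1)).mpr hab)
  linarith [mul_log_le_phi_sub hmono hφ ha1 hab.le, mul_pos hLa hlog]

theorem continuousOn_phi (hmono : MonotoneOn L (Ici 1))
    (hφ : ∀ t, φ t = ∫ u in (1:ℝ)..t, L u / u) {b : ℝ} (hb : 1 ≤ b) :
    ContinuousOn φ (Icc 1 b) := by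
  have h := intervalIntegral.continuousOn_primitive_interval'
    (intervalIntegrable_div_id hmono le_rfl hb) left_mem_uIcc
  rw [uIcc_of_le hb] at h
  exact h.congr fun t _ => hφ t

theorem tendsto_phi_atTop (hmono : MonotoneOn L (Ici 1))
    (hφ : ∀ t, φ t = ∫ u in (1:ℝ)..t, L u / u) (htop : Tendsto L atTop atTop) :
    Tendsto φ atTop atTop := by
  obtain ⟨u, hLu, hu⟩ := ((htop.eventually_ge_atTop 1).and (eventually_ge_atTop 1)).exists
  have hu0 : 0 < u := zero_lt_one.trans_le hu
  refine tendsto_atTop_mono' atTop ?_ (tendsto_atTop_add_const_left atTop (φ u)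
    (tendsto_log_atTop.comp (tendsto_id.atTop_div_const hu0)))
  filter_upwards [eventually_ge_atTop u] with x hx
  have hlog : 0 ≤ log (x / u) := log_nonneg ((one_le_div hu0).mpr hx)
  have := mul_log_le_phi_sub hmono hφ hu hx
  simp only [Function.comp_apply, id]
  nlinarith

theorem exists_phi_eq (hmono : MonotoneOn L (Ici 1))
    (hφ : ∀ t, φ t = ∫ u in (1:ℝ)..t, L u / u) (htop : Tendsto L atTop atTop) {x : ℝ}
    (hx : 0 ≤ x) : ∃ y, 1 ≤ y ∧ φ y = x := by
  obtain ⟨Y, hY, hxY⟩ := ((eventually_ge_atTop 1).and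
    ((tendsto_phi_atTop hmono hφ htop).eventually_ge_atTop x)).exists
  have hφ1 : φ 1 = 0 := by simp [hφ]
  obtain ⟨y, hy, hyx⟩ := intermediate_value_Icc hY (continuousOn_phi hmono hφ hY)
    ⟨hφ1 ▸ hx, hxY⟩
  exact ⟨y, hy.1, hyx⟩

theorem phi_le_of_mem_Icc (hmono : MonotoneOn L (Ici 1))
    (hφ : ∀ t, φ t = ∫ u in (1:ℝ)..t, L u / u) {t M : ℝ} (ht : t ∈ Icc 1 M) :
    φ t ≤ |L M| * log M := by
  have h := phi_sub_le_mul_log hmono hφ le_rfl ht.1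
  have hφ1 : φ 1 = 0 := by simp [hφ]
  rw [hφ1, sub_zero, div_one] at h
  have hlog : 0 ≤ log t := log_nonneg ht.1
  calc φ t ≤ L t * log t := h
    _ ≤ |L M| * log t :=
      mul_le_mul_of_nonneg_right ((hmono ht.1 (ht.1.trans ht.2) ht.2).trans (le_abs_self _)) hlog
    _ ≤ |L M| * log M :=
      mul_le_mul_of_nonneg_left (log_le_log (zero_lt_one.trans_le ht.1) ht.2) (abs_nonneg _)

theorem one_le_psi_and_phi_psi (hmono : MonotoneOn L (Ici 1))
    (hφ : ∀ t, φ t = ∫ u in (1:ℝ)..t, L u / u) (htop : Tendsto L atTop atTop) {ψ : ℝ → ℝ}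
    (hψ : ∀ y ∈ Ici (1:ℝ), ψ (φ y) = y) {x : ℝ} (hx : 0 ≤ x) : 1 ≤ ψ x ∧ φ (ψ x) = x := by
  obtain ⟨y, hy, rfl⟩ := exists_phi_eq hmono hφ htop hx
  rw [hψ y hy]
  exact ⟨hy, rfl⟩

theorem tendsto_psi_atTop (hmono : MonotoneOn L (Ici 1))
    (hφ : ∀ t, φ t = ∫ u in (1:ℝ)..t, L u / u) (htop : Tendsto L atTop atTop) {ψ : ℝ → ℝ}
    (hψ : ∀ y ∈ Ici (1:ℝ), ψ (φ y) = y) : Tendsto ψ atTop atTop := by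
  refine tendsto_atTop.mpr fun M => ?_
  filter_upwards [eventually_gt_atTop (|L (max M 1)| * log (max M 1)), eventually_ge_atTop 0]
    with x hxM hx
  obtain ⟨h1, hφψ⟩ := one_le_psi_and_phi_psi hmono hφ htop hψ hx
  by_contra! h
  have := phi_le_of_mem_Icc hmono hφ ⟨h1, h.le.trans (le_max_left M 1)⟩
  linarith

theorem le_two_mul_of_phi_eq_add (hmono : MonotoneOn L (Ici 1))
    (hφ : ∀ t, φ t = ∫ u in (1:ℝ)..t, L u / u) {u a b c : ℝ} (hu : 1 ≤ u) (hLu : 0 < L u)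
    (ha : u ≤ a) (hb : u ≤ b) (hab : φ b = φ a + c) (hc : c < L a * log 2) : b ≤ 2 * a := by
  have ha0 : 0 < a := zero_lt_one.trans_le (hu.trans ha)
  have h2a : u ≤ 2 * a := by linarith
  refine ((strictMonoOn_phi hmono hφ hu hLu).le_iff_le hb h2a).mp ?_
  have := mul_log_le_phi_sub hmono hφ (hu.trans ha) (by linarith : a ≤ 2 * a)
  rw [mul_div_cancel_right₀ _ ha0.ne'] at this
  linarith

theorem div_le_of_phi_eq_add (hmono : MonotoneOn L (Ici 1))
    (hφ : ∀ t, φ t = ∫ u in (1:ℝ)..t, L u / u) {a b c : ℝ} (ha : 1 ≤ a) (hab : a ≤ b)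
    (hLa : 0 < L a) (hLb : L b ≤ 2 * L a) (hc : 0 < c) (h : φ b = φ a + c) :
    a / L a ≤ 2 / c * (b - a) := by
  have ha0 : 0 < a := zero_lt_one.trans_le ha
  have hLb0 : 0 ≤ L b := hLa.le.trans (hmono ha (ha.trans hab) hab)
  have hlog : log (b / a) ≤ (b - a) / a := by
    rw [sub_div, div_self ha0.ne']
    exact log_le_sub_one_of_pos (div_pos (ha0.trans_le hab) ha0)
  have hca : c * a ≤ 2 * L a * (b - a) := by
    have := (phi_sub_le_mul_log hmono hφ ha hab).trans (mul_le_mul_of_nonneg_left hlog hLb0)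
    rw [h, add_sub_cancel_left, mul_div_assoc', le_div_iff₀ ha0] at this
    nlinarith
  rw [div_le_iff₀ hLa, show 2 / c * (b - a) * L a = 2 * L a * (b - a) / c by ring,
    le_div_iff₀ hc]
  linarith

theorem tendsto_psi_mul_natCast_atTop (hmono : MonotoneOn L (Ici 1))
    (hφ : ∀ t, φ t = ∫ u in (1:ℝ)..t, L u / u) (htop : Tendsto L atTop atTop) {ψ : ℝ → ℝ}
    (hψ : ∀ y ∈ Ici (1:ℝ), ψ (φ y) = y) {c : ℝ} (hc : 0 < c) :
    Tendsto (fun k : ℕ => ψ (c * k)) atTop atTop :=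
  (tendsto_psi_atTop hmono hφ htop hψ).comp (tendsto_natCast_atTop_atTop.const_mul_atTop hc)

theorem eventually_psi_gap_bounds (hmono : MonotoneOn L (Ici 1))
    (hφ : ∀ t, φ t = ∫ u in (1:ℝ)..t, L u / u) (htop : Tendsto L atTop atTop)
    (hsv : SlowlyVarying L) {ψ : ℝ → ℝ} (hψ : ∀ y ∈ Ici (1:ℝ), ψ (φ y) = y) {c : ℝ}
    (hc : 0 < c) :
    ∀ᶠ k : ℕ in atTop, ψ (c * k) ≤ ψ (c * ↑(k + 1)) ∧ ψ (c * ↑(k + 1)) ≤ 2 * ψ (c * k) ∧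
      ψ (c * k) / L (ψ (c * k)) ≤ 2 / c * (ψ (c * ↑(k + 1)) - ψ (c * k)) := by
  obtain ⟨u, hu, hcu⟩ : ∃ u, 1 ≤ u ∧ c < L u * log 2 :=
    ((eventually_ge_atTop 1).and (htop.eventually_gt_atTop (c / log 2))).exists.imp
      fun u h => ⟨h.1, (div_lt_iff₀ (log_pos one_lt_two)).mp h.2⟩
  have hLu : 0 < L u := (mul_pos_iff_of_pos_right (log_pos one_lt_two)).mp (hc.trans hcu)
  have hgood := (tendsto_psi_mul_natCast_atTop hmono hφ htop hψ hc).eventually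
    ((eventually_ge_atTop u).and
      (hsv.eventually_le_mul (htop.eventually_gt_atTop 0) two_pos one_lt_two))
  filter_upwards [hgood, (tendsto_add_atTop_nat 1).eventually hgood]
    with k ⟨ha, hdbl⟩ ⟨hb, _⟩
  have hφψ : ∀ j : ℕ, φ (ψ (c * j)) = c * j := fun j =>
    (one_le_psi_and_phi_psi hmono hφ htop hψ (by positivity)).2
  have hφab : φ (ψ (c * ↑(k + 1))) = φ (ψ (c * k)) + c := by
    rw [hφψ, hφψ]
    push_cast
    ring
  have hLa : L u ≤ L (ψ (c * k)) := hmono hu (hu.trans ha) ha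
  have hab : ψ (c * k) ≤ ψ (c * ↑(k + 1)) :=
    ((strictMonoOn_phi hmono hφ hu hLu).le_iff_le ha hb).mp (by linarith)
  have hb2 := le_two_mul_of_phi_eq_add hmono hφ hu hLu ha hb hφab (hcu.trans_le (by gcongr))
  exact ⟨hab, hb2, div_le_of_phi_eq_add hmono hφ (hu.trans ha) hab (hLu.trans_le hLa)
    ((hmono (hu.trans hb) (hu.trans (by linarith)) hb2).trans hdbl) hc hφab⟩

end Phi

theorem tsum_ite_le_of_le_mul_sub {n : ℕ → ℝ} {w : ℕ → ℝ≥0∞} {C : ℝ≥0∞} (hn0 : 0 ≤ n 0)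
    (hmono : Monotone n) (hdbl : ∀ k, n (k + 1) ≤ 2 * n k)
    (hw : ∀ k, w k ≤ C * ENNReal.ofReal (n (k + 1) - n k)) (T : ℝ) :
    ∑' k, (if n k ≤ T then w k else 0) ≤ 2 * C * ENNReal.ofReal T := by
  have key : ∀ M, ∑ k ∈ Finset.range M, (if n k ≤ T then w k else 0)
      ≤ C * ENNReal.ofReal (min (n M) (2 * T)) := by
    intro M
    induction M with
    | zero => simp
    | succ M ih =>
      have hnM : 0 ≤ n M := hn0.trans (hmono M.zero_le)
      rw [Finset.sum_range_succ]
      split_ifs with hT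
      · calc _ ≤ C * ENNReal.ofReal (min (n M) (2 * T)) + C * ENNReal.ofReal (n (M + 1) - n M) :=
              add_le_add ih (hw M)
          _ = C * ENNReal.ofReal (n (M + 1)) := by
              rw [min_eq_left (by linarith), ← mul_add,
                ← ENNReal.ofReal_add hnM (sub_nonneg.mpr (hmono M.le_succ)), add_sub_cancel]
          _ = C * ENNReal.ofReal (min (n (M + 1)) (2 * T)) := by
              rw [min_eq_left (by linarith [hdbl M])]
      · rw [add_zero]
        exact ih.trans (by gcongr; exact hmono M.le_succ)
  refine ENNReal.tsum_le_of_sum_range_le fun M => (key M).trans ?_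
  rw [mul_comm 2 C, mul_assoc, ← ENNReal.ofReal_ofNat 2, ← ENNReal.ofReal_mul zero_le_two]
  gcongr
  exact min_le_right _ _

theorem tsum_mul_measure_le_lintegral {Ω : Type*} [MeasurableSpace Ω] (μ : Measure Ω)
    {n : ℕ → ℝ} {w : ℕ → ℝ≥0∞} {C : ℝ≥0∞} (hC : C ≠ ⊤) (hn0 : 0 ≤ n 0) (hmono : Monotone n)
    (hdbl : ∀ k, n (k + 1) ≤ 2 * n k) (hw : ∀ k, w k ≤ C * ENNReal.ofReal (n (k + 1) - n k))
    {A : ℕ → Set Ω} (hA : ∀ k, MeasurableSet (A k)) {g : Ω → ℝ}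
    (hAg : ∀ k, ∀ ω ∈ A k, n k ≤ g ω) :
    ∑' k, w k * μ (A k) ≤ 2 * C * ∫⁻ ω, ENNReal.ofReal (g ω) ∂μ := by
  calc ∑' k, w k * μ (A k) = ∫⁻ ω, ∑' k, (A k).indicator (fun _ => w k) ω ∂μ := by
        rw [lintegral_tsum fun k => (measurable_const.indicator (hA k)).aemeasurable]
        exact tsum_congr fun k => (lintegral_indicator_const (hA k) _).symm
    _ ≤ ∫⁻ ω, 2 * C * ENNReal.ofReal (g ω) ∂μ := by
        refine lintegral_mono fun ω => (ENNReal.tsum_le_tsum fun k => ?_).trans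
          (tsum_ite_le_of_le_mul_sub hn0 hmono hdbl hw (g ω))
        by_cases hω : ω ∈ A k
        · simp [hω, hAg k ω hω]
        · simp [hω]
    _ = 2 * C * ∫⁻ ω, ENNReal.ofReal (g ω) ∂μ :=
        lintegral_const_mul' _ _ (ENNReal.mul_ne_top ENNReal.ofNat_ne_top hC)

theorem stmt17_general {Ω : Type*} [MeasurableSpace Ω] (P : Measure Ω) [IsProbabilityMeasure P]
    (X : Ω → ℝ) (hmeas : Measurable X)
    (L : ℝ → ℝ)
    (hmono : MonotoneOn L (Set.Ici 1))
    (htop : Tendsto L atTop atTop)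
    (hsv : SlowlyVarying L)
    (φ ψ : ℝ → ℝ) (hφ : ∀ t, φ t = ∫ u in (1:ℝ)..t, L u / u)
    (hψ : ∀ y ∈ Set.Ici (1:ℝ), ψ (φ y) = y)
    (c : ℝ) (hc : 1 < c)
    (f finv : ℝ → ℝ)
    (hf : ∀ᶠ x in atTop,
      f x = min ((x / L x) * (Real.log (L x) + Real.log (Real.log x))) x)
    (hfinvmono : ∃ y₀ : ℝ, MonotoneOn finv (Set.Ici y₀))
    (hfinv : ∀ᶠ x in atTop, finv (f x) = x)
    (hmom : (∫⁻ ω, ENNReal.ofReal (finv ((X ω) ^ 2)) ∂P) < ⊤) :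
    ∀ η > (0:ℝ),
      (∑' k : ℕ, ENNReal.ofReal (ψ (c * k) / L (ψ (c * k)))
          * P {ω | η * Real.sqrt (f (ψ (c * k))) < X ω}) < ⊤ := by
  intro η hη
  have hc0 : 0 < c := by linarith
  obtain ⟨r, hr, hfinvX⟩ := hsv.exists_mul_le_finv_sq hmono htop hf hfinvmono hfinv hη
  obtain ⟨N, hN⟩ := eventually_atTop.mp <| (eventually_psi_gap_bounds hmono hφ htop hsv hψ hc0).and
    ((tendsto_psi_mul_natCast_atTop hmono hφ htop hψ hc0).eventually hfinvX)
  rw [← ENNReal.summable.sum_add_tsum_nat_add' (k := N)]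
  set n : ℕ → ℝ := fun j => ψ (c * ↑(j + N))
  have hgap : ∀ j, n j ≤ n (j + 1) ∧ n (j + 1) ≤ 2 * n j ∧
      n j / L (n j) ≤ 2 / c * (n (j + 1) - n j) := fun j => by
    simpa only [n, Nat.add_right_comm j 1 N] using (hN (j + N) le_add_self).1
  refine ENNReal.add_lt_top.mpr ⟨ENNReal.sum_lt_top.mpr fun k _ =>
    ENNReal.mul_lt_top ENNReal.ofReal_lt_top (measure_lt_top P _), ?_⟩
  refine (tsum_mul_measure_le_lintegral P (n := n)
    (C := ENNReal.ofReal (2 / c)) (g := fun ω => r⁻¹ * finv (X ω ^ 2)) ENNReal.ofReal_ne_top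
    (zero_le_one.trans (one_le_psi_and_phi_psi hmono hφ htop hψ (by positivity)).1)
    (monotone_nat_of_le_succ fun j => (hgap j).1) (fun j => (hgap j).2.1) (fun j => ?_)
    (fun j => measurableSet_lt measurable_const hmeas)
    (fun j ω hω => (le_inv_mul_iff₀ hr).mpr ((hN (j + N) le_add_self).2 _ hω))).trans_lt ?_
  · rw [← ENNReal.ofReal_mul (by positivity)]
    exact ENNReal.ofReal_le_ofReal (hgap j).2.2
  · simp_rw [ENNReal.ofReal_mul (inv_nonneg.mpr hr.le)]
    rw [lintegral_const_mul' _ _ ENNReal.ofReal_ne_top]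
    exact ENNReal.mul_lt_top (ENNReal.mul_lt_top (by simp) ENNReal.ofReal_lt_top)
      (ENNReal.mul_lt_top ENNReal.ofReal_lt_top hmom)

theorem stmt17 {Ω : Type*} [MeasurableSpace Ω] (P : Measure Ω) [IsProbabilityMeasure P]
    (X : Ω → ℝ) (hXpos : ∀ ω, 0 ≤ X ω) (hmeas : Measurable X)
    (L : ℝ → ℝ)
    (hdiff : DifferentiableOn ℝ L (Set.Ici 1))
    (hmono : MonotoneOn L (Set.Ici 1))
    (htop : Tendsto L atTop atTop)
    (hsv : SlowlyVarying L)
    (hdec : ∃ x₀ : ℝ, AntitoneOn (fun x => x * deriv L x / L x) (Set.Ici x₀))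
    (φ ψ : ℝ → ℝ) (hφ : ∀ t, φ t = ∫ u in (1:ℝ)..t, L u / u)
    (hψ : ∀ y ∈ Set.Ici (1:ℝ), ψ (φ y) = y)
    (hψ' : ∀ x ∈ Set.Ici (0:ℝ), φ (ψ x) = x)
    (c : ℝ) (hc : 1 < c)
    (f finv : ℝ → ℝ)
    (hf : ∀ᶠ x in atTop,
      f x = min ((x / L x) * (Real.log (L x) + Real.log (Real.log x))) x)
    (hfmono : ∃ x₀ : ℝ, MonotoneOn f (Set.Ici x₀))
    (hfinvmono : ∃ y₀ : ℝ, MonotoneOn finv (Set.Ici y₀))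
    (hfinv : ∀ᶠ x in atTop, finv (f x) = x)
    (hmom : (∫⁻ ω, ENNReal.ofReal (finv ((X ω) ^ 2)) ∂P) < ⊤) :
    ∀ η > (0:ℝ),
      (∑' k : ℕ, ENNReal.ofReal (ψ (c * k) / L (ψ (c * k)))
          * P {ω | η * Real.sqrt (f (ψ (c * k))) < X ω}) < ⊤ :=
  stmt17_general P X hmeas L hmono htop hsv φ ψ hφ hψ c hc f finv hf hfinvmono hfinv hmom
end
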